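/- For all integers n ≥ 1, 1 ≤ k ≤ n, and every strictly increasing k-tuple I in {1,…,n}, the rational number F(n,k,I) is an integer. -/

import Mathlib

open Finset

/-- The `d`-th elementary symmetric function of a multiset of rationals. -/
def mesymm (s : Multiset ℚ) (d : ℕ) : ℚ :=
  ((Multiset.powersetCard d s).map Multiset.prod).sum

/-- The multiset `Δ(J)` of differences `j_m − j_ℓ` for `ℓ < m`. -/
def deltaJ {n k : ℕ} (J : Fin k → Fin n) : Multiset ℚ :=
  (Finset.univ.filter fun p : Fin k × Fin k => p.1 < p.2).val.map
    fun p => ((J p.2 : ℕ) : ℚ) - ((J p.1 : ℕ) : ℚ)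

/-- Weak compositions of an integer `M` into `k` parts (empty if `M < 0`). -/
def wcomps (k : ℕ) (M : ℤ) : Finset (Fin k → ℕ) :=
  if 0 ≤ M then Finset.Nat.antidiagonalTuple k M.toNat else ∅

/-- `A_J`, where the entries of `I`, `J` are the 1-based values `i_r = (I r) + 1`,
`j_r = (J r) + 1`. -/
def AJ {n k : ℕ} (I J : Fin k → Fin n) : ℚ :=
  (-1 : ℚ) ^ (∑ r, ((J r : ℕ) + 1)) * mesymm (deltaJ J) (k.choose 2) *
    ∏ r, (1 / ((Nat.factorial (n - 1 - (J r : ℕ)) : ℚ) *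
      (Nat.factorial ((J r : ℕ) - (I r : ℕ)) : ℚ)))

/-- `B_J`. -/
def BJ {n k : ℕ} (I J : Fin k → Fin n) : ℚ :=
  ∑ d ∈ Finset.range (k.choose 2 + 1),
    (-1 : ℚ) ^ d * mesymm (deltaJ J) (k.choose 2 - d) *
      ∑ lam ∈ wcomps k
          ((k : ℤ) * ((n : ℤ) - (k : ℤ) + 1) + (d : ℤ) - ∑ r, ((I r : ℕ) + 1 : ℤ)),
        ∏ s, ∑ p ∈ Finset.range ((I s : ℕ) + 1),
          (-1 : ℚ) ^ p * ((p : ℚ) + ((J s : ℕ) : ℚ) - ((I s : ℕ) : ℚ)) ^ ((I s : ℕ) + lam s) /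
            ((Nat.factorial ((I s : ℕ) - p) : ℚ) * (Nat.factorial p : ℚ))

/-- The closed combinatorial formula `F(n,k,I)`. -/
def Fint (n k : ℕ) (I : Fin k → Fin n) : ℚ :=
  (-1 : ℚ) ^ ((k : ℤ) * ((n : ℤ) - (k : ℤ)) - ∑ r, ((I r : ℕ) + 1 : ℤ)) *
    ∑ J ∈ Finset.univ.filter (fun J : Fin k → Fin n =>
        Function.Injective J ∧ ∀ r, I r ≤ J r), AJ I J * BJ I J

/-! ### Auxiliary development -/

section Aux

theorem key_dvd (m : ℕ) : ∀ u : ℕ, (m.factorial : ℤ) ∣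
    ∑ t ∈ range (m+1), (-1)^t * (m.choose t) * (t:ℤ)^u := by
  induction m with
  | zero => intro u; simp
  | succ m ih =>
    intro u
    match u with
    | 0 =>
      simp only [pow_zero, mul_one]
      rw [Int.alternating_sum_range_choose_of_ne (Nat.succ_ne_zero m)]
      exact dvd_zero _
    | u+1 =>
      have step : ∑ t ∈ range (m+1+1), (-1:ℤ)^t * ((m+1).choose t) * (t:ℤ)^(u+1)
          = -(m+1) * ∑ j ∈ range (u+1), (u.choose j) *
              ∑ s ∈ range (m+1), (-1)^s * (m.choose s) * (s:ℤ)^j := by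
        rw [Finset.sum_range_succ'] -- peel off t = 0
        simp only [pow_zero, Nat.choose_zero_right, Nat.cast_zero,
          zero_pow (Nat.succ_ne_zero u), mul_zero, add_zero, Nat.cast_one]
        have key : ∀ s ∈ range (m+1), (-1:ℤ)^(s+1) * ((m+1).choose (s+1)) * (((s+1:ℕ)):ℤ)^(u+1)
            = -(m+1) * ∑ j ∈ range (u+1), (u.choose j) * ((-1)^s * (m.choose s) * (s:ℤ)^j) := by
          intro s _
          have h1 : ((m+1) : ℤ) * (m.choose s) = ((m+1).choose (s+1)) * (s+1) := by
            exact_mod_cast congrArg (Nat.cast : ℕ → ℤ) (Nat.add_one_mul_choose_eq m s)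
          push_cast
          have h2 : ((s:ℤ)+1)^(u+1) = ((s:ℤ)+1) * ∑ j ∈ range (u+1), (u.choose j) * (s:ℤ)^j := by
            rw [pow_succ']
            congr 1
            rw [add_pow]
            refine Finset.sum_congr rfl fun j hj => ?_
            push_cast
            ring
          rw [h2, Finset.mul_sum, Finset.mul_sum, Finset.mul_sum]
          refine Finset.sum_congr rfl fun j hj => ?_
          linear_combination ((-1:ℤ)^s * (u.choose j) * (s:ℤ)^j) * h1
        rw [Finset.sum_congr rfl key]
        simp only [Finset.mul_sum]
        rw [Finset.sum_comm]
      rw [step]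
      have : ((m+1).factorial : ℤ) = (m+1) * m.factorial := by
        rw [Nat.factorial_succ]; push_cast; ring
      rw [this]
      rw [neg_mul, Finset.mul_sum]
      refine (dvd_neg.2 (Finset.dvd_sum fun j hj => ?_))
      exact mul_dvd_mul_left _ ((ih j).mul_left _)

def IsInt (q : ℚ) : Prop := ∃ z : ℤ, q = z

variable {α : Type*}

lemma IsInt.add {a b : ℚ} (ha : IsInt a) (hb : IsInt b) : IsInt (a + b) := by
  obtain ⟨x, rfl⟩ := ha; obtain ⟨y, rfl⟩ := hb; exact ⟨x + y, by push_cast; ring⟩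
lemma IsInt.mul {a b : ℚ} (ha : IsInt a) (hb : IsInt b) : IsInt (a * b) := by
  obtain ⟨x, rfl⟩ := ha; obtain ⟨y, rfl⟩ := hb; exact ⟨x * y, by push_cast; ring⟩
lemma IsInt.intCast (z : ℤ) : IsInt (z : ℚ) := ⟨z, rfl⟩
lemma IsInt.natCast (n : ℕ) : IsInt (n : ℚ) := ⟨n, by push_cast; ring⟩
lemma IsInt.zero : IsInt 0 := ⟨0, by norm_num⟩
lemma IsInt.one : IsInt 1 := ⟨1, by norm_num⟩
lemma IsInt.neg {a : ℚ} (ha : IsInt a) : IsInt (-a) := by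
  obtain ⟨x, rfl⟩ := ha; exact ⟨-x, by push_cast; ring⟩
lemma IsInt.sum {s : Finset α} {f : α → ℚ} (h : ∀ a ∈ s, IsInt (f a)) :
    IsInt (∑ a ∈ s, f a) := by
  classical
  induction s using Finset.induction_on with
  | empty => simpa using IsInt.zero
  | insert _ _ hx ih =>
    rw [Finset.sum_insert hx]
    exact (h _ (Finset.mem_insert_self _ _)).add
      (ih fun a ha => h a (Finset.mem_insert_of_mem ha))
lemma IsInt.prod {s : Finset α} {f : α → ℚ} (h : ∀ a ∈ s, IsInt (f a)) :
    IsInt (∏ a ∈ s, f a) := by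
  classical
  induction s using Finset.induction_on with
  | empty => simpa using IsInt.one
  | insert _ _ hx ih =>
    rw [Finset.prod_insert hx]
    exact (h _ (Finset.mem_insert_self _ _)).mul
      (ih fun a ha => h a (Finset.mem_insert_of_mem ha))
lemma IsInt.pow {a : ℚ} (ha : IsInt a) (n : ℕ) : IsInt (a ^ n) := by
  obtain ⟨x, rfl⟩ := ha; exact ⟨x ^ n, by push_cast; ring⟩

/-- The basic integer-valued weighted sum. -/
lemma isInt_wsum (m u : ℕ) :
    IsInt (∑ t ∈ range (m+1), (-1:ℚ)^t * (m.choose t) * (t:ℚ)^u / m.factorial) := by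
  obtain ⟨z, hz⟩ := key_dvd m u
  refine ⟨z, ?_⟩
  rw [← Finset.sum_div]
  rw [div_eq_iff (by exact_mod_cast m.factorial_ne_zero : ((m.factorial : ℚ)) ≠ 0)]
  have : ((∑ t ∈ range (m+1), (-1)^t * (m.choose t) * (t:ℤ)^u : ℤ) : ℚ)
      = ∑ t ∈ range (m+1), (-1:ℚ)^t * (m.choose t) * (t:ℚ)^u := by
    push_cast; ring
  rw [← this, hz]
  push_cast; ring

/-- The integration functional. -/
noncomputable def Phi {k : ℕ} (M N : Fin k → ℕ) (P : MvPolynomial (Fin k ⊕ Fin k) ℤ) : ℚ :=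
  ∑ a ∈ Fintype.piFinset (fun s => range (M s + 1)),
    ∑ p ∈ Fintype.piFinset (fun s => range (N s + 1)),
      (∏ s, ((-1:ℚ)^(a s) * ((M s).choose (a s)) / (M s).factorial)
          * ((-1:ℚ)^(p s) * ((N s).choose (p s)) / (N s).factorial))
        * MvPolynomial.eval₂ (Int.castRingHom ℚ)
            (Sum.elim (fun s => (a s : ℚ)) (fun s => (p s : ℚ))) P

lemma Phi_add {k : ℕ} (M N : Fin k → ℕ) (P Q : MvPolynomial (Fin k ⊕ Fin k) ℤ) :
    Phi M N (P + Q) = Phi M N P + Phi M N Q := by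
  unfold Phi
  rw [← Finset.sum_add_distrib]
  refine Finset.sum_congr rfl fun a _ => ?_
  rw [← Finset.sum_add_distrib]
  refine Finset.sum_congr rfl fun p _ => ?_
  rw [MvPolynomial.eval₂_add]
  ring

lemma isInt_Phi_monomial {k : ℕ} (M N : Fin k → ℕ) (u : (Fin k ⊕ Fin k) →₀ ℕ) (c : ℤ) :
    IsInt (Phi M N (MvPolynomial.monomial u c)) := by
  unfold Phi
  have ev : ∀ (a p : Fin k → ℕ),
      MvPolynomial.eval₂ (Int.castRingHom ℚ)
        (Sum.elim (fun s => (a s : ℚ)) (fun s => (p s : ℚ))) (MvPolynomial.monomial u c)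
      = (c : ℚ) * (∏ s, (a s : ℚ)^(u (Sum.inl s))) * (∏ s, (p s : ℚ)^(u (Sum.inr s))) := by
    intro a p
    rw [MvPolynomial.eval₂_monomial]
    rw [Finsupp.prod_pow]
    rw [Fintype.prod_sum_type]
    simp only [Sum.elim_inl, Sum.elim_inr, Int.coe_castRingHom]
    ring
  have step : ∑ a ∈ Fintype.piFinset (fun s => range (M s + 1)),
      ∑ p ∈ Fintype.piFinset (fun s => range (N s + 1)),
      (∏ s, ((-1:ℚ)^(a s) * ((M s).choose (a s)) / (M s).factorial)
          * ((-1:ℚ)^(p s) * ((N s).choose (p s)) / (N s).factorial))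
        * MvPolynomial.eval₂ (Int.castRingHom ℚ)
            (Sum.elim (fun s => (a s : ℚ)) (fun s => (p s : ℚ))) (MvPolynomial.monomial u c)
      = (c:ℚ) * ((∏ s, ∑ t ∈ range (M s + 1),
            (-1:ℚ)^t * ((M s).choose t) * (t:ℚ)^(u (Sum.inl s)) / (M s).factorial)
        * (∏ s, ∑ t ∈ range (N s + 1),
            (-1:ℚ)^t * ((N s).choose t) * (t:ℚ)^(u (Sum.inr s)) / (N s).factorial)) := by
    rw [Finset.prod_univ_sum, Finset.prod_univ_sum]
    calc _ = ∑ a ∈ Fintype.piFinset (fun s => range (M s + 1)),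
        ((c:ℚ) * ∏ s, ((-1:ℚ)^(a s) * ((M s).choose (a s)) * ((a s):ℚ)^(u (Sum.inl s)) / (M s).factorial))
          * ∑ p ∈ Fintype.piFinset (fun s => range (N s + 1)),
            (∏ s, ((-1:ℚ)^(p s) * ((N s).choose (p s)) * ((p s):ℚ)^(u (Sum.inr s)) / (N s).factorial)) := by
          refine Finset.sum_congr rfl fun a _ => ?_
          rw [Finset.mul_sum]
          refine Finset.sum_congr rfl fun p _ => ?_
          rw [ev a p]
          have h1 : (∏ s, ((-1:ℚ)^(a s) * ((M s).choose (a s)) * ((a s):ℚ)^(u (Sum.inl s)) / (M s).factorial))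
              = (∏ s, ((-1:ℚ)^(a s) * ((M s).choose (a s)) / (M s).factorial)) * ∏ s, ((a s):ℚ)^(u (Sum.inl s)) := by
            rw [← Finset.prod_mul_distrib]
            exact Finset.prod_congr rfl fun s _ => by ring
          have h2 : (∏ s, ((-1:ℚ)^(p s) * ((N s).choose (p s)) * ((p s):ℚ)^(u (Sum.inr s)) / (N s).factorial))
              = (∏ s, ((-1:ℚ)^(p s) * ((N s).choose (p s)) / (N s).factorial)) * ∏ s, ((p s):ℚ)^(u (Sum.inr s)) := by
            rw [← Finset.prod_mul_distrib]
            exact Finset.prod_congr rfl fun s _ => by ring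
          rw [h1, h2, Finset.prod_mul_distrib]
          ring
      _ = _ := by
          rw [← Finset.sum_mul, ← Finset.mul_sum]
          ring
  rw [step]
  exact (IsInt.intCast c).mul (((IsInt.prod fun s _ => isInt_wsum (M s) (u (Sum.inl s)))).mul
    (IsInt.prod fun s _ => isInt_wsum (N s) (u (Sum.inr s))))

lemma isInt_Phi {k : ℕ} (M N : Fin k → ℕ) (P : MvPolynomial (Fin k ⊕ Fin k) ℤ) :
    IsInt (Phi M N P) := by
  induction P using MvPolynomial.induction_on' with
  | monomial u c => exact isInt_Phi_monomial M N u c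
  | add p q hp hq => rw [Phi_add]; exact hp.add hq

lemma fact_inv_eq (m a : ℕ) (h : a ≤ m) :
    (1:ℚ) / ((Nat.factorial (m - a) : ℚ) * (Nat.factorial a : ℚ))
      = (m.choose a : ℚ) / (m.factorial : ℚ) := by
  rw [div_eq_div_iff (by positivity) (by exact_mod_cast m.factorial_pos.ne' : (m.factorial:ℚ) ≠ 0)]
  rw [one_mul]
  have := Nat.choose_mul_factorial_mul_factorial h
  push_cast [← this]
  ring

lemma Multiset.esymm_map' {R S : Type*} [CommSemiring R] [CommSemiring S]
    (f : R →+* S) (s : Multiset R) (e : ℕ) :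
    (s.map f).esymm e = f (s.esymm e) := by
  unfold Multiset.esymm
  rw [Multiset.powersetCard_map, map_multiset_sum, Multiset.map_map, Multiset.map_map]
  congr 1
  refine Multiset.map_congr rfl fun t ht => ?_
  exact (map_multiset_prod f t).symm

lemma card_ltpairs (k : ℕ) :
    (Finset.univ.filter fun p : Fin k × Fin k => p.1 < p.2).card = k.choose 2 := by
  classical
  set A := Finset.univ.filter fun p : Fin k × Fin k => p.1 < p.2 with hA
  set B := Finset.univ.filter fun p : Fin k × Fin k => p.2 < p.1 with hB
  have hBA : B = A.image Prod.swap := by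
    ext p
    simp only [hA, hB, Finset.mem_image, Finset.mem_filter, Finset.mem_univ, true_and]
    constructor
    · intro h; exact ⟨p.swap, h, p.swap_swap⟩
    · rintro ⟨q, hq, rfl⟩; exact hq
  have hcardAB : B.card = A.card := by
    rw [hBA, Finset.card_image_of_injective _ Prod.swap_injective]
  have hdisj : Disjoint A B := by
    rw [Finset.disjoint_filter]
    intro p _ h1
    simp only [not_lt]
    exact h1.le
  have hunion : A ∪ B = (Finset.univ : Finset (Fin k)).offDiag := by
    rw [← Finset.filter_or]
    ext p
    simp only [Finset.mem_filter, Finset.mem_univ, true_and, Finset.mem_offDiag]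
    constructor
    · rintro (h|h)
      exacts [h.ne, h.ne']
    · intro h
      exact lt_or_gt_of_ne h
  have hcard : A.card + B.card = k * k - k := by
    rw [← Finset.card_union_of_disjoint hdisj, hunion, Finset.offDiag_card, Finset.card_univ,
      Fintype.card_fin]
  rw [Nat.choose_two_right]
  have hkk : k * (k-1) = k*k - k := by
    cases k with
    | zero => simp
    | succ m => simp [Nat.mul_sub]; ring_nf; omega
  omega

lemma mesymm_card_eq_prod (s : Multiset ℚ) : mesymm s (Multiset.card s) = s.prod := by
  have h1 : Multiset.card (Multiset.powersetCard (Multiset.card s) s) = 1 := by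
    rw [Multiset.card_powersetCard, Nat.choose_self]
  have h2 : s ∈ Multiset.powersetCard (Multiset.card s) s :=
    Multiset.mem_powersetCard.2 ⟨le_refl s, rfl⟩
  obtain ⟨a, ha⟩ := Multiset.card_eq_one.1 h1
  rw [ha] at h2
  rw [Multiset.mem_singleton] at h2
  subst h2
  unfold mesymm
  rw [ha]
  simp

lemma card_deltaJ {n k : ℕ} (J : Fin k → Fin n) :
    Multiset.card (deltaJ J) = k.choose 2 := by
  unfold deltaJ
  rw [Multiset.card_map, ← Finset.card_def]
  exact card_ltpairs k

lemma AJ_eq_zero_of_not_inj {n k : ℕ} (I J : Fin k → Fin n) (h : ¬ Function.Injective J) :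
    AJ I J = 0 := by
  have h0 : (0:ℚ) ∈ deltaJ J := by
    rw [Function.not_injective_iff] at h
    obtain ⟨r, r', hval, hne⟩ := h
    rcases lt_or_gt_of_ne hne with hlt | hlt
    · refine Multiset.mem_map.2 ⟨(r, r'), ?_, by rw [hval]; ring⟩
      rw [Finset.mem_val, Finset.mem_filter]
      exact ⟨Finset.mem_univ _, hlt⟩
    · refine Multiset.mem_map.2 ⟨(r', r), ?_, by rw [hval]; ring⟩
      rw [Finset.mem_val, Finset.mem_filter]
      exact ⟨Finset.mem_univ _, hlt⟩
  have : mesymm (deltaJ J) (k.choose 2) = 0 := by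
    rw [← card_deltaJ J, mesymm_card_eq_prod]
    exact Multiset.prod_eq_zero h0
  unfold AJ
  rw [this]
  ring

/-- The multiset of difference polynomials. -/
noncomputable def Dpoly {n k : ℕ} (I : Fin k → Fin n) :
    Multiset (MvPolynomial (Fin k ⊕ Fin k) ℤ) :=
  (Finset.univ.filter fun pr : Fin k × Fin k => pr.1 < pr.2).val.map
    (fun pr => (MvPolynomial.X (Sum.inl pr.2) + MvPolynomial.C ((I pr.2 : ℕ) : ℤ))
             - (MvPolynomial.X (Sum.inl pr.1) + MvPolynomial.C ((I pr.1 : ℕ) : ℤ)))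

noncomputable def Ppoly {n k : ℕ} (I : Fin k → Fin n) (d : ℕ) (lam : Fin k → ℕ) :
    MvPolynomial (Fin k ⊕ Fin k) ℤ :=
  (Dpoly I).esymm (k.choose 2) * (Dpoly I).esymm (k.choose 2 - d) *
    ∏ s, (MvPolynomial.X (Sum.inl s) + MvPolynomial.X (Sum.inr s)) ^ ((I s : ℕ) + lam s)

noncomputable def evmap {k : ℕ} (a p : Fin k → ℕ) : MvPolynomial (Fin k ⊕ Fin k) ℤ →+* ℚ :=
  MvPolynomial.eval₂Hom (Int.castRingHom ℚ) (Sum.elim (fun s => (a s : ℚ)) (fun s => (p s : ℚ)))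

lemma deltaJ_eval {n k : ℕ} (I : Fin k → Fin n) (a p : Fin k → ℕ) (J : Fin k → Fin n)
    (hJ : ∀ s, (J s : ℕ) = (I s : ℕ) + a s) :
    deltaJ J = (Dpoly I).map (evmap a p) := by
  unfold deltaJ Dpoly
  rw [Multiset.map_map]
  refine Multiset.map_congr rfl fun pr _ => ?_
  simp only [Function.comp_apply, map_sub, map_add, evmap, MvPolynomial.eval₂Hom_X',
    MvPolynomial.eval₂Hom_C, Sum.elim_inl, Int.coe_castRingHom, hJ]
  push_cast
  ring

lemma mesymm_eval {n k : ℕ} (I : Fin k → Fin n) (a p : Fin k → ℕ) (J : Fin k → Fin n)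
    (hJ : ∀ s, (J s : ℕ) = (I s : ℕ) + a s) (e : ℕ) :
    mesymm (deltaJ J) e = evmap a p ((Dpoly I).esymm e) := by
  have : mesymm (deltaJ J) e = (deltaJ J).esymm e := rfl
  rw [this, deltaJ_eval I a p J hJ, Multiset.esymm_map']


lemma pointwise {n k : ℕ} (I : Fin k → Fin n) (a : Fin k → ℕ) (J : Fin k → Fin n)
    (hJv : ∀ s, (J s : ℕ) = (I s : ℕ) + a s) (hb : ∀ s, a s ≤ n - 1 - (I s : ℕ)) :
    AJ I J * BJ I J
      = ∑ d ∈ range (k.choose 2 + 1),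
          ∑ lam ∈ wcomps k ((k:ℤ)*((n:ℤ)-(k:ℤ)+1) + (d:ℤ) - ∑ r, ((I r:ℕ)+1:ℤ)),
        (-1:ℚ)^(∑ r, ((I r:ℕ)+1)) * ((-1:ℚ)^d *
          ∑ p ∈ Fintype.piFinset (fun s => range ((I s:ℕ) + 1)),
            (∏ s, ((-1:ℚ)^(a s) * (((n - 1 - (I s:ℕ)).choose (a s) : ℕ) : ℚ) / (((n - 1 - (I s:ℕ)).factorial : ℕ) : ℚ))
                * ((-1:ℚ)^(p s) * ((((I s:ℕ)).choose (p s) : ℕ) : ℚ) / ((((I s:ℕ)).factorial : ℕ) : ℚ)))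
              * MvPolynomial.eval₂ (Int.castRingHom ℚ)
                  (Sum.elim (fun s => (a s : ℚ)) (fun s => (p s : ℚ))) (Ppoly I d lam)) := by
  classical
  have hA : AJ I J = (-1:ℚ)^(∑ r, ((I r:ℕ)+1)) * (∏ s, (-1:ℚ)^(a s))
      * mesymm (deltaJ J) (k.choose 2)
      * ∏ s, ((((n-1-(I s:ℕ)).choose (a s) : ℕ) : ℚ) / (((n-1-(I s:ℕ)).factorial : ℕ) : ℚ)) := by
    unfold AJ
    have hsign : (-1:ℚ)^(∑ r, ((J r:ℕ)+1)) = (-1:ℚ)^(∑ r, ((I r:ℕ)+1)) * ∏ s, (-1:ℚ)^(a s) := by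
      rw [Finset.prod_pow_eq_pow_sum, ← pow_add]
      congr 1
      rw [← Finset.sum_add_distrib]
      refine Finset.sum_congr rfl fun r _ => ?_
      have := hJv r
      omega
    have hfact : ∀ r ∈ (Finset.univ : Finset (Fin k)),
        (1:ℚ) / ((Nat.factorial (n - 1 - (J r:ℕ)) : ℚ) * (Nat.factorial ((J r:ℕ) - (I r:ℕ)) : ℚ))
        = (((n-1-(I r:ℕ)).choose (a r) : ℕ) : ℚ) / (((n-1-(I r:ℕ)).factorial : ℕ) : ℚ) := by
      intro r _
      have hlt : (I r : ℕ) < n := (I r).isLt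
      have h1 : n - 1 - (J r : ℕ) = (n - 1 - (I r:ℕ)) - a r := by rw [hJv r]; omega
      have h2 : (J r:ℕ) - (I r:ℕ) = a r := by rw [hJv r]; omega
      rw [h1, h2, fact_inv_eq _ _ (hb r)]
    rw [hsign, Finset.prod_congr rfl hfact]
  have hBinner : ∀ (lam : Fin k → ℕ),
      (∏ s, ∑ p ∈ range ((I s:ℕ)+1),
          (-1:ℚ)^p * ((p:ℚ) + ((J s:ℕ):ℚ) - ((I s:ℕ):ℚ))^((I s:ℕ)+lam s) /
            ((Nat.factorial ((I s:ℕ)-p):ℚ) * (Nat.factorial p : ℚ)))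
      = ∑ p ∈ Fintype.piFinset (fun s => range ((I s:ℕ)+1)),
          ∏ s, (((-1:ℚ)^(p s) * ((((I s:ℕ)).choose (p s) : ℕ) : ℚ) / ((((I s:ℕ)).factorial : ℕ) : ℚ))
            * ((a s:ℚ) + ((p s:ℚ)))^((I s:ℕ)+lam s)) := by
    intro lam
    rw [Finset.prod_univ_sum]
    refine Finset.sum_congr rfl fun p hp => Finset.prod_congr rfl fun s _ => ?_
    have hple : p s ≤ (I s:ℕ) := by
      have := Fintype.mem_piFinset.1 hp s
      rw [Finset.mem_range] at this
      omega
    have hbase : (((p s):ℚ) + ((J s:ℕ):ℚ) - ((I s:ℕ):ℚ)) = (a s:ℚ) + ((p s):ℚ) := by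
      rw [hJv s]; push_cast; ring
    rw [hbase, div_eq_mul_one_div, fact_inv_eq ((I s:ℕ)) (p s) hple]
    ring
  have hEval : ∀ (d : ℕ) (lam : Fin k → ℕ) (p : Fin k → ℕ),
      MvPolynomial.eval₂ (Int.castRingHom ℚ)
          (Sum.elim (fun s => (a s:ℚ)) (fun s => (p s:ℚ))) (Ppoly I d lam)
      = mesymm (deltaJ J) (k.choose 2) * mesymm (deltaJ J) (k.choose 2 - d)
          * ∏ s, ((a s:ℚ) + (p s:ℚ))^((I s:ℕ)+lam s) := by
    intro d lam p
    have hcoe : MvPolynomial.eval₂ (Int.castRingHom ℚ)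
        (Sum.elim (fun s => (a s:ℚ)) (fun s => (p s:ℚ))) (Ppoly I d lam)
        = evmap a p (Ppoly I d lam) := rfl
    rw [hcoe]
    unfold Ppoly
    rw [map_mul, map_mul, map_prod]
    rw [← mesymm_eval I a p J hJv, ← mesymm_eval I a p J hJv]
    congr 1
    refine Finset.prod_congr rfl fun s _ => ?_
    rw [map_pow, map_add]
    simp [evmap]
  unfold BJ
  rw [Finset.mul_sum]
  refine Finset.sum_congr rfl fun d hd => ?_
  conv_lhs => rw [Finset.mul_sum]
  rw [Finset.mul_sum]
  refine Finset.sum_congr rfl fun lam hlam => ?_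
  rw [hBinner lam, hA]
  simp only [Finset.mul_sum]
  refine Finset.sum_congr rfl fun p hp => ?_
  rw [hEval d lam p]
  have hP : (∏ s, (-1:ℚ)^(a s))
      * (∏ s, ((((n-1-(I s:ℕ)).choose (a s) : ℕ) : ℚ) / (((n-1-(I s:ℕ)).factorial : ℕ) : ℚ)))
      * (∏ s, (((-1:ℚ)^(p s) * ((((I s:ℕ)).choose (p s) : ℕ) : ℚ) / ((((I s:ℕ)).factorial : ℕ) : ℚ))
            * ((a s:ℚ) + ((p s:ℚ)))^((I s:ℕ)+lam s)))
      = (∏ s, (((-1:ℚ)^(a s) * (((n - 1 - (I s:ℕ)).choose (a s) : ℕ) : ℚ) / (((n - 1 - (I s:ℕ)).factorial : ℕ) : ℚ))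
                * ((-1:ℚ)^(p s) * ((((I s:ℕ)).choose (p s) : ℕ) : ℚ) / ((((I s:ℕ)).factorial : ℕ) : ℚ))))
        * ∏ s, ((a s:ℚ) + (p s:ℚ))^((I s:ℕ)+lam s) := by
    rw [← Finset.prod_mul_distrib, ← Finset.prod_mul_distrib, ← Finset.prod_mul_distrib]
    exact Finset.prod_congr rfl fun s _ => by ring
  linear_combination ((-1:ℚ)^(∑ r, ((I r:ℕ)+1)) * (-1:ℚ)^d * mesymm (deltaJ J) (k.choose 2)
    * mesymm (deltaJ J) (k.choose 2 - d)) * hP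



lemma main_eq {n k : ℕ} (hn : 1 ≤ n) (I : Fin k → Fin n) :
    ∑ J ∈ Finset.univ.filter (fun J : Fin k → Fin n =>
        Function.Injective J ∧ ∀ r, I r ≤ J r), AJ I J * BJ I J
    = ∑ d ∈ range (k.choose 2 + 1),
        ∑ lam ∈ wcomps k ((k:ℤ)*((n:ℤ)-(k:ℤ)+1) + (d:ℤ) - ∑ r, ((I r:ℕ)+1:ℤ)),
          (-1:ℚ)^(∑ r, ((I r:ℕ)+1)) * ((-1:ℚ)^d *
            Phi (fun s => n - 1 - (I s:ℕ)) (fun s => (I s:ℕ)) (Ppoly I d lam)) := by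
  classical
  -- Step A: drop injectivity
  have hsub : Finset.univ.filter (fun J : Fin k → Fin n =>
        Function.Injective J ∧ ∀ r, I r ≤ J r)
      ⊆ Finset.univ.filter (fun J : Fin k → Fin n => ∀ r, I r ≤ J r) := by
    intro J hJ
    rw [Finset.mem_filter] at *
    exact ⟨hJ.1, hJ.2.2⟩
  have hzero : ∀ J ∈ Finset.univ.filter (fun J : Fin k → Fin n => ∀ r, I r ≤ J r),
      J ∉ Finset.univ.filter (fun J : Fin k → Fin n =>
        Function.Injective J ∧ ∀ r, I r ≤ J r) → AJ I J * BJ I J = 0 := by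
    intro J hJ hJn
    rw [Finset.mem_filter] at hJ hJn
    push_neg at hJn
    have hni : ¬ Function.Injective J := by
      by_contra hc
      obtain ⟨r, hr⟩ := hJn hJ.1 hc
      exact absurd (hJ.2 r) (not_le.2 hr)
    rw [AJ_eq_zero_of_not_inj I J hni, zero_mul]
  rw [Finset.sum_subset hsub hzero]
  -- Step B: reindex by a = J - I
  have step2 : ∑ J ∈ Finset.univ.filter (fun J : Fin k → Fin n => ∀ r, I r ≤ J r),
      AJ I J * BJ I J
      = ∑ a ∈ Fintype.piFinset (fun s => range (n - 1 - (I s:ℕ) + 1)),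
          ∑ d ∈ range (k.choose 2 + 1),
            ∑ lam ∈ wcomps k ((k:ℤ)*((n:ℤ)-(k:ℤ)+1) + (d:ℤ) - ∑ r, ((I r:ℕ)+1:ℤ)),
          (-1:ℚ)^(∑ r, ((I r:ℕ)+1)) * ((-1:ℚ)^d *
            ∑ p ∈ Fintype.piFinset (fun s => range ((I s:ℕ) + 1)),
              (∏ s, ((-1:ℚ)^(a s) * (((n - 1 - (I s:ℕ)).choose (a s) : ℕ) : ℚ) / (((n - 1 - (I s:ℕ)).factorial : ℕ) : ℚ))
                  * ((-1:ℚ)^(p s) * ((((I s:ℕ)).choose (p s) : ℕ) : ℚ) / ((((I s:ℕ)).factorial : ℕ) : ℚ)))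
                * MvPolynomial.eval₂ (Int.castRingHom ℚ)
                    (Sum.elim (fun s => (a s : ℚ)) (fun s => (p s : ℚ))) (Ppoly I d lam)) := by
    refine (Finset.sum_nbij'
      (i := fun (a : Fin k → ℕ) => (fun s => (⟨((I s:ℕ) + a s) % n, Nat.mod_lt _ (by omega)⟩ : Fin n)))
      (j := fun (J : Fin k → Fin n) => (fun s => (J s : ℕ) - (I s : ℕ)))
      ?_ ?_ ?_ ?_ ?_).symm
    · intro a ha
      rw [Finset.mem_filter]
      refine ⟨Finset.mem_univ _, fun r => ?_⟩
      have har : a r ≤ n - 1 - (I r:ℕ) := by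
        have := Fintype.mem_piFinset.1 ha r
        rw [Finset.mem_range] at this; omega
      have hlt : (I r : ℕ) < n := (I r).isLt
      have : ((I r:ℕ) + a r) % n = (I r:ℕ) + a r := Nat.mod_eq_of_lt (by omega)
      show (I r : ℕ) ≤ _
      simp only [this]
      omega
    · intro J hJ
      rw [Finset.mem_filter] at hJ
      rw [Fintype.mem_piFinset]
      intro s
      rw [Finset.mem_range]
      have h1 : (I s : ℕ) ≤ (J s : ℕ) := hJ.2 s
      have h2 : (J s : ℕ) < n := (J s).isLt
      show (J s : ℕ) - (I s : ℕ) < n - 1 - (I s:ℕ) + 1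
      omega
    · intro a ha
      funext s
      have har : a s ≤ n - 1 - (I s:ℕ) := by
        have := Fintype.mem_piFinset.1 ha s
        rw [Finset.mem_range] at this; omega
      have hlt : (I s : ℕ) < n := (I s).isLt
      show ((I s:ℕ) + a s) % n - (I s:ℕ) = a s
      rw [Nat.mod_eq_of_lt (by omega)]
      omega
    · intro J hJ
      rw [Finset.mem_filter] at hJ
      funext s
      have h1 : (I s : ℕ) ≤ (J s : ℕ) := hJ.2 s
      have h2 : (J s : ℕ) < n := (J s).isLt
      apply Fin.ext
      show ((I s:ℕ) + ((J s:ℕ) - (I s:ℕ))) % n = (J s : ℕ)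
      rw [Nat.add_sub_cancel' h1, Nat.mod_eq_of_lt h2]
    · intro a ha
      have hbound : ∀ s, a s ≤ n - 1 - (I s:ℕ) := by
        intro s
        have := Fintype.mem_piFinset.1 ha s
        rw [Finset.mem_range] at this; omega
      have hJv : ∀ s, (((⟨((I s:ℕ) + a s) % n, Nat.mod_lt _ (by omega)⟩ : Fin n)) : ℕ)
          = (I s : ℕ) + a s := by
        intro s
        have hlt : (I s : ℕ) < n := (I s).isLt
        show ((I s:ℕ) + a s) % n = (I s:ℕ) + a s
        exact Nat.mod_eq_of_lt (by have := hbound s; omega)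
      exact (pointwise I a _ hJv hbound).symm
  rw [step2]
  rw [Finset.sum_comm]
  refine Finset.sum_congr rfl fun d hd => ?_
  rw [Finset.sum_comm]
  refine Finset.sum_congr rfl fun lam hlam => ?_
  unfold Phi
  simp only [← Finset.mul_sum]


end Aux

/-- The rational number `F(n,k,I)` is an integer. -/
theorem F_is_integer (n k : ℕ) (hn : 1 ≤ n) (hk : 1 ≤ k) (hkn : k ≤ n)
    (I : Fin k → Fin n) (hI : StrictMono I) :
    ∃ m : ℤ, Fint n k I = (m : ℚ) := by
  unfold Fint
  rw [main_eq hn I]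
  have hS : IsInt (∑ d ∈ range (k.choose 2 + 1),
      ∑ lam ∈ wcomps k ((k:ℤ)*((n:ℤ)-(k:ℤ)+1) + (d:ℤ) - ∑ r, ((I r:ℕ)+1:ℤ)),
        (-1:ℚ)^(∑ r, ((I r:ℕ)+1)) * ((-1:ℚ)^d *
          Phi (fun s => n - 1 - (I s:ℕ)) (fun s => (I s:ℕ)) (Ppoly I d lam))) := by
    refine IsInt.sum fun d _ => IsInt.sum fun lam _ => ?_
    exact ((IsInt.one.neg).pow _).mul (((IsInt.one.neg).pow _).mul (isInt_Phi _ _ _))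
  obtain ⟨m, hm⟩ := hS
  rcases Int.even_or_odd ((k:ℤ)*((n:ℤ)-(k:ℤ)) - ∑ r, ((I r:ℕ)+1:ℤ)) with he | ho
  · refine ⟨m, ?_⟩
    rw [he.neg_one_zpow, one_mul, hm]
  · refine ⟨-m, ?_⟩
    rw [ho.neg_one_zpow, hm]
    push_cast
    ring
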